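/- arXiv:math/0612723 — 2 statements merged into one kernel-verified Lean document; each statement's English description precedes it below -/
import Mathlib

section
/- Let G be a finite solvable group, N a cyclic normal subgroup of G, a ∈ G, C = C_G(a), and C_N = {g ∈ G : [a,g] ∈ N}. Then dl(C_N / core_{C_N}(C)) ≤ 2. -/
/-!
Since `Aut N` is abelian for cyclic `N`, every commutator of `G` centralizes `N`. Hence on
`H = C_N ∩ C_G(N)` the map `g ↦ [a, g] = a⁻¹ g⁻¹ a g` is a homomorphism into the abelian group
`N`: `[a, u v] = [a, v] · v⁻¹ [a, u] v = [a, v] [a, u]`. Consequently `[a, u v] = [a, v u]` for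
`u, v ∈ H`, which says exactly that `a` commutes with `⁅u, v⁆`. As `C_N' ≤ H`, the normal
subgroup `C_N''` lies in `C_G(a)`, hence in the core.
-/

open scoped commutatorElement

section

variable {G : Type*} [Group G]

theorem Subgroup.commutator_le_centralizer_of_isCyclic (N : Subgroup G) [N.Normal] [IsCyclic N] :
    _root_.commutator G ≤ Subgroup.centralizer N := by
  refine (Abelianization.commutator_subset_ker
    ((IsCyclic.mulAutMulEquiv N).toMonoidHom.comp MulAut.conjNormal)).trans fun g hg n hn => ?_
  have hg : MulAut.conjNormal (H := N) g = 1 := by simpa using hg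
  have hconj : g * n * g⁻¹ = n := by
    simpa using congrArg (fun σ : MulAut N => (σ ⟨n, hn⟩ : G)) hg
  exact (mul_inv_eq_iff_eq_mul.mp hconj).symm

theorem commute_commutatorElement_of_conj_commutator_eq {a u v : G}
    (h : a⁻¹ * (u * v)⁻¹ * a * (u * v) = a⁻¹ * (v * u)⁻¹ * a * (v * u)) :
    Commute a ⁅u, v⁆ :=
  calc a * ⁅u, v⁆ = u * v * a * (a⁻¹ * (u * v)⁻¹ * a * (u * v)) * (v * u)⁻¹ := by group
    _ = u * v * a * (a⁻¹ * (v * u)⁻¹ * a * (v * u)) * (v * u)⁻¹ := by rw [h]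
    _ = ⁅u, v⁆ * a := by group

theorem Subgroup.commutator_le_centralizer_singleton {a : G} {H A : Subgroup G}
    [IsMulCommutative A] (hHA : H ≤ Subgroup.centralizer A)
    (hmem : ∀ h ∈ H, a⁻¹ * h⁻¹ * a * h ∈ A) :
    ⁅H, H⁆ ≤ Subgroup.centralizer {a} := by
  have conj_commutator_mul_of_mem : ∀ {x y}, x ∈ H → y ∈ H →
      a⁻¹ * (x * y)⁻¹ * a * (x * y) = (a⁻¹ * y⁻¹ * a * y) * (a⁻¹ * x⁻¹ * a * x) := by
    intro x y hx hy
    calc a⁻¹ * (x * y)⁻¹ * a * (x * y)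
        = (a⁻¹ * y⁻¹ * a * y) * (y⁻¹ * ((a⁻¹ * x⁻¹ * a * x) * y)) := by group
      _ = (a⁻¹ * y⁻¹ * a * y) * (a⁻¹ * x⁻¹ * a * x) := by
        rw [hHA hy _ (hmem x hx), inv_mul_cancel_left]
  rw [Subgroup.commutator_le]
  intro u hu v hv
  rw [Subgroup.mem_centralizer_singleton_iff]
  refine (commute_commutatorElement_of_conj_commutator_eq ?_).symm
  rw [conj_commutator_mul_of_mem hu hv, conj_commutator_mul_of_mem hv hu,
    setLike_mul_comm (hmem v hv) (hmem u hu)]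

theorem Subgroup.map_subtype_derivedSeries_two (H : Subgroup G) :
    (derivedSeries H 2).map H.subtype = ⁅⁅H, H⁆, ⁅H, H⁆⁆ := by
  simp only [derivedSeries_succ, derivedSeries_zero, Subgroup.map_commutator,
    ← MonoidHom.range_eq_map, Subgroup.range_subtype]

theorem derivedSeries_quotient_eq_bot_iff (M : Subgroup G) [M.Normal] (n : ℕ) :
    derivedSeries (G ⧸ M) n = ⊥ ↔ derivedSeries G n ≤ M := by
  rw [← map_derivedSeries_eq (QuotientGroup.mk'_surjective M), Subgroup.map_eq_bot_iff,
    QuotientGroup.ker_mk']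

end

theorem stmt7_general {G : Type*} [Group G]
    (N : Subgroup G) [N.Normal] (hcyc : IsCyclic ↥N) (a : G)
    (CN : Subgroup G) (hCN : ∀ g : G, g ∈ CN ↔ a⁻¹ * g⁻¹ * a * g ∈ N) :
    derivedSeries (↥CN ⧸ ((Subgroup.centralizer {a}).subgroupOf CN).normalCore) 2 = ⊥ := by
  have : IsMulCommutative N := by
    let _ := hcyc.commGroup
    infer_instance
  have hder₁ : ⁅CN, CN⁆ ≤ CN ⊓ Subgroup.centralizer N :=
    le_inf (Subgroup.commutator_le_self CN)
      ((Subgroup.commutator_mono le_top le_top).trans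
        (Subgroup.commutator_le_centralizer_of_isCyclic N))
  have hder₂ : ⁅⁅CN, CN⁆, ⁅CN, CN⁆⁆ ≤ Subgroup.centralizer {a} :=
    (Subgroup.commutator_mono hder₁ hder₁).trans
      (Subgroup.commutator_le_centralizer_singleton inf_le_right fun h hh => (hCN h).1 hh.1)
  rw [derivedSeries_quotient_eq_bot_iff, Subgroup.normal_le_normalCore,
    ← Subgroup.comap_subtype, ← Subgroup.map_le_iff_le_comap,
    Subgroup.map_subtype_derivedSeries_two]
  exact hder₂

/-- `G` finite solvable, `N` cyclic normal, `a ∈ G`, `C = C_G(a)`,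
`C_N = {g : [a,g] ∈ N}`. Then `dl(C_N/core_{C_N}(C)) ≤ 2`. -/
theorem stmt7 {G : Type*} [Group G] [Fintype G] (hG : IsSolvable G)
    (N : Subgroup G) [N.Normal] (hcyc : IsCyclic ↥N) (a : G)
    (CN : Subgroup G) (hCN : ∀ g : G, g ∈ CN ↔ a⁻¹ * g⁻¹ * a * g ∈ N) :
    derivedSeries (↥CN ⧸ ((Subgroup.centralizer {a}).subgroupOf CN).normalCore) 2 = ⊥ :=
  stmt7_general N hcyc a CN hCN
end

section
/- For any finite supersolvable group G and any conjugacy classes A, B of G such that AB ∩ Z(G) ≠ ∅, the derived length of G/C_G(A) is at most 2·η(AB) − 1. -/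
open Pointwise

/-- A group is supersolvable if it has a normal series with all terms normal
in the whole group and all factors cyclic. -/
def IsSupersolvable (G : Type*) [Group G] : Prop :=
  ∃ (n : ℕ) (s : Fin (n + 1) → Subgroup G),
    s 0 = ⊥ ∧ s (Fin.last n) = ⊤ ∧
    ∃ _ : ∀ i, (s i).Normal,
      ∀ i : Fin n, s i.castSucc ≤ s i.succ ∧
        IsCyclic (↥(s i.succ) ⧸ (s i.castSucc).subgroupOf (s i.succ))

/-- The conjugacy class of `a` in `G`. -/
def conjClass {G : Type*} [Group G] (a : G) : Set G := {x | ∃ g : G, g⁻¹ * a * g = x}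

/-- The number of distinct conjugacy classes of `G` meeting a set `X`. -/
noncomputable def eta {G : Type*} [Group G] (X : Set G) : ℕ :=
  ((fun x => conjClass x) '' X).ncard

/-! If `a'b' = z ∈ Z(G)` with `a' ∈ A`, `b' ∈ B`, then `B = A⁻¹z`, so `AB = AA⁻¹z` and
`η(AB) = η(AA⁻¹)`. Induction on `|G|` then gives `G^(η(AA⁻¹)) ≤ C_G(A)`. A nontrivial supersolvable
`G` has a nontrivial cyclic normal subgroup `T`, and `G' ≤ C_G(T)` because `Aut T` is abelian.
Let `m ≥ 1` be the value of `η` for the image of `AA⁻¹` in `G/T`; by induction, every `h` in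
`K = G^(m)` satisfies `x⁻¹x^h ∈ T` for `x ∈ A`. If `T ∩ AA⁻¹ = 1`, this forces `x^h = x`.
Otherwise the class of some `d ≠ 1` in `AA⁻¹ ∩ T` merges with that of `1`, so `m < η(AA⁻¹)`; and
as `K ≤ G'` centralizes `T`, the map `h ↦ x⁻¹x^h` is a homomorphism `K → T`, whence
`K' ≤ C_G(x)`. -/

section ConjClass

variable {G H : Type*} [Group G] [Group H]

lemma mem_conjClass_self (a : G) : a ∈ conjClass a := ⟨1, by group⟩

lemma conjClass_eq_of_mem {a x : G} (h : x ∈ conjClass a) : conjClass x = conjClass a := by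
  obtain ⟨g, rfl⟩ := h
  ext y
  constructor
  · rintro ⟨k, rfl⟩; exact ⟨g * k, by group⟩
  · rintro ⟨k, rfl⟩; exact ⟨g⁻¹ * k, by group⟩

lemma conjClass_one : conjClass (1 : G) = {1} := by
  ext y
  simp [conjClass, eq_comm]

lemma conjClass_inv (a : G) : (conjClass a)⁻¹ = conjClass a⁻¹ := by
  ext y
  simp only [Set.mem_inv, conjClass, Set.mem_ofPred_eq]
  constructor
  · rintro ⟨g, hg⟩; exact ⟨g, by rw [← inv_inv y, ← hg]; group⟩
  · rintro ⟨g, rfl⟩; exact ⟨g, by group⟩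

lemma image_conjClass {f : G →* H} (hf : Function.Surjective f) (a : G) :
    f '' conjClass a = conjClass (f a) := by
  ext y
  constructor
  · rintro ⟨x, ⟨g, rfl⟩, rfl⟩; exact ⟨f g, by simp⟩
  · rintro ⟨h, rfl⟩
    obtain ⟨g, rfl⟩ := hf h
    exact ⟨g⁻¹ * a * g, ⟨g, rfl⟩, by simp⟩

lemma conjClass_mul_of_mem_center {z : G} (hz : z ∈ Subgroup.center G) (x : G) :
    conjClass (x * z) = conjClass x * {z} := by
  have hcomm (g : G) : g⁻¹ * (x * z) * g = g⁻¹ * x * g * z :=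
    calc g⁻¹ * (x * z) * g = g⁻¹ * x * (z * g) := by group
      _ = g⁻¹ * x * g * z := by rw [← Subgroup.mem_center_iff.mp hz g]; group
  ext y
  simp only [Set.mul_singleton, conjClass, Set.mem_image, Set.mem_ofPred_eq, hcomm]
  constructor
  · rintro ⟨g, rfl⟩; exact ⟨_, ⟨g, rfl⟩, rfl⟩
  · rintro ⟨_, ⟨g, rfl⟩, rfl⟩; exact ⟨g, rfl⟩

lemma one_mem_conjClass_mul_inv (a : G) : (1 : G) ∈ conjClass a * (conjClass a)⁻¹ :=
  ⟨a, mem_conjClass_self a, a⁻¹, by simpa using mem_conjClass_self a, mul_inv_cancel a⟩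

lemma conj_mul_inv_mem_conjClass_mul_inv {a x : G} (hx : x ∈ conjClass a) (g : G) :
    g⁻¹ * x * g * x⁻¹ ∈ conjClass a * (conjClass a)⁻¹ := by
  obtain ⟨k, rfl⟩ := hx
  exact ⟨_, ⟨k * g, by group⟩, _, by rw [Set.mem_inv, inv_inv]; exact ⟨k, rfl⟩, rfl⟩

lemma mem_centralizer_of_conj_mul_inv_eq_one {s : Set G} {g : G}
    (h : ∀ x ∈ s, g⁻¹ * x * g * x⁻¹ = 1) : g ∈ Subgroup.centralizer s :=
  Subgroup.mem_centralizer_iff.mpr fun x hx =>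
    calc x * g = g * (g⁻¹ * x * g) := by group
      _ = g * x := by rw [mul_inv_eq_one.mp (h x hx)]

lemma centralizer_conjClass_eq_top {a : G} (h : ∀ d ∈ conjClass a * (conjClass a)⁻¹, d = 1) :
    Subgroup.centralizer (conjClass a) = ⊤ :=
  eq_top_iff.mpr fun g _ => mem_centralizer_of_conj_mul_inv_eq_one fun _ hx =>
    h _ (conj_mul_inv_mem_conjClass_mul_inv hx g)

end ConjClass

section Eta

variable {G H : Type*} [Group G] [Group H]

lemma one_le_eta [Finite G] {X : Set G} (hX : X.Nonempty) : 1 ≤ eta X := by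
  rw [eta, Nat.one_le_iff_ne_zero, Ne, Set.ncard_eq_zero]
  exact (hX.image _).ne_empty

lemma image_conjClasses {f : G →* H} (hf : Function.Surjective f) (X : Set G) :
    (fun y => conjClass y) '' (f '' X) = Set.image f '' ((fun x => conjClass x) '' X) := by
  simp only [Set.image_image, image_conjClass hf]

lemma eta_image_le [Finite G] {f : G →* H} (hf : Function.Surjective f) (X : Set G) :
    eta (f '' X) ≤ eta X := by
  rw [eta, eta, image_conjClasses hf]
  exact Set.ncard_image_le

lemma eta_image_lt [Finite G] {f : G →* H} (hf : Function.Surjective f) {X : Set G}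
    (h1 : 1 ∈ X) {d : G} (hd : d ∈ X) (hd1 : d ≠ 1) (hfd : f d = 1) :
    eta (f '' X) < eta X := by
  rw [eta, eta, image_conjClasses hf]
  refine lt_of_le_of_ne Set.ncard_image_le fun heq => hd1 ?_
  have hcl : conjClass d = conjClass 1 :=
    (Set.injOn_of_ncard_image_eq heq) ⟨d, hd, rfl⟩ ⟨1, h1, rfl⟩ <| by
      simp only [image_conjClass hf, hfd, map_one]
  simpa [hcl, conjClass_one] using mem_conjClass_self d

lemma eta_mul_singleton_of_mem_center {z : G} (hz : z ∈ Subgroup.center G) (X : Set G) :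
    eta (X * {z}) = eta X := by
  have hinj : Function.Injective (fun S : Set G => S * {z}) := by
    simpa only [Set.mul_singleton] using Set.image_injective.mpr (mul_left_injective z)
  rw [eta, eta, Set.mul_singleton, Set.image_image]
  simp only [conjClass_mul_of_mem_center hz]
  rw [← Set.image_image (fun S : Set G => S * {z}), Set.ncard_image_of_injective _ hinj]

end Eta

section Supersolvable

variable {G H : Type*} [Group G] [Group H]

lemma IsSupersolvable.of_surjective (hG : IsSupersolvable G) {f : G →* H}
    (hf : Function.Surjective f) : IsSupersolvable H := by
  obtain ⟨n, s, h0, hl, hnorm, hstep⟩ := hG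
  refine ⟨n, fun i => (s i).map f, by simp [h0], by simp [hl, Subgroup.map_top_of_surjective f hf],
    fun i => (hnorm i).map f hf, fun i => ⟨Subgroup.map_mono (hstep i).1, ?_⟩⟩
  have := (hstep i).2
  have := (hnorm i.castSucc).map f hf
  set K := s i.succ
  set L := s i.castSucc
  have hLK : L.subgroupOf K ≤ ((L.map f).subgroupOf (K.map f)).comap (f.subgroupMap K) :=
    fun x hx => ⟨x, hx, rfl⟩
  refine isCyclic_of_surjective (QuotientGroup.map _ _ (f.subgroupMap K) hLK) fun y => ?_
  obtain ⟨y, rfl⟩ := QuotientGroup.mk_surjective y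
  obtain ⟨x, rfl⟩ := f.subgroupMap_surjective K y
  exact ⟨x, rfl⟩

lemma Fin.exists_castSucc_eq_and_succ_ne {α : Type*} {n : ℕ} {f : Fin (n + 1) → α} {a : α}
    (h0 : f 0 = a) (hl : f (Fin.last n) ≠ a) : ∃ i : Fin n, f i.castSucc = a ∧ f i.succ ≠ a := by
  by_contra! h
  exact hl (Fin.induction h0 h (Fin.last n))

/-- The first nontrivial term of a supersolvable series. -/
lemma IsSupersolvable.exists_normal_isCyclic_ne_bot [Nontrivial G] (hG : IsSupersolvable G) :
    ∃ T : Subgroup G, T.Normal ∧ IsCyclic T ∧ T ≠ ⊥ := by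
  obtain ⟨n, s, h0, hl, hnorm, hstep⟩ := hG
  obtain ⟨i, hbot, hne⟩ := Fin.exists_castSucc_eq_and_succ_ne h0 (hl ▸ top_ne_bot)
  have := (hstep i).2
  have := hnorm i.castSucc
  refine ⟨s i.succ, hnorm _, isCyclic_of_injective
    (QuotientGroup.mk' ((s i.castSucc).subgroupOf (s i.succ))) ?_, hne⟩
  rw [← MonoidHom.ker_eq_bot_iff, QuotientGroup.ker_mk', hbot, Subgroup.bot_subgroupOf]

lemma Subgroup.card_quotient_lt_card [Finite G] {T : Subgroup G} (hT : T ≠ ⊥) :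
    Nat.card (G ⧸ T) < Nat.card G := by
  rw [← Subgroup.index_eq_card, ← T.index_mul_card]
  exact lt_mul_of_one_lt_right (Nat.pos_of_ne_zero Subgroup.index_ne_zero_of_finite)
    ((Subgroup.one_lt_card_iff_ne_bot T).mpr hT)

end Supersolvable

section Commutator

variable {G : Type*} [Group G]

lemma commutator_le_centralizer_of_isCyclic (T : Subgroup G) [T.Normal] [IsCyclic T] :
    commutator G ≤ Subgroup.centralizer (T : Set G) := by
  intro g hg
  have hker := Abelianization.commutator_subset_ker
    ((IsCyclic.mulAutMulEquiv T).toMonoidHom.comp MulAut.conjNormal) hg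
  rw [MonoidHom.mem_ker, MonoidHom.comp_apply, MulEquiv.coe_toMonoidHom,
    MulEquiv.map_eq_one_iff] at hker
  refine Subgroup.mem_centralizer_iff.mpr fun t ht => ?_
  have hconj := congrArg Subtype.val (DFunLike.congr_fun hker ⟨t, ht⟩)
  rw [MulAut.conjNormal_apply] at hconj
  exact (mul_inv_eq_iff_eq_mul.mp hconj).symm

lemma commutator_le_centralizer_singleton {T H : Subgroup G} [IsMulCommutative T]
    (hHT : H ≤ Subgroup.centralizer (T : Set G)) {x : G}
    (hx : ∀ h ∈ H, x⁻¹ * (h⁻¹ * x * h) ∈ T) : ⁅H, H⁆ ≤ Subgroup.centralizer {x} := by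
  set f : G → G := fun h => x⁻¹ * (h⁻¹ * x * h)
  have hanti : ∀ p ∈ H, ∀ q ∈ H, f (p * q) = f q * f p := fun p hp q hq => by
    have hcomm : f p * q = q * f p := Subgroup.mem_centralizer_iff.mp (hHT hq) _ (hx p hp)
    calc f (p * q) = f q * (q⁻¹ * (f p * q)) := by simp only [f]; group
      _ = f q * f p := by rw [hcomm, inv_mul_cancel_left]
  rw [Subgroup.commutator_le]
  intro g₁ h₁ g₂ h₂
  have hf : f (g₁ * g₂) = f (g₂ * g₁) := by
    rw [hanti _ h₁ _ h₂, hanti _ h₂ _ h₁, setLike_mul_comm (hx _ h₂) (hx _ h₁)]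
  have hconj : (g₁ * g₂)⁻¹ * x * (g₁ * g₂) = (g₂ * g₁)⁻¹ * x * (g₂ * g₁) := mul_left_cancel hf
  rw [Subgroup.mem_centralizer_singleton_iff, commutatorElement_def]
  calc g₁ * g₂ * g₁⁻¹ * g₂⁻¹ * x = g₁ * g₂ * ((g₂ * g₁)⁻¹ * x * (g₂ * g₁)) * (g₂ * g₁)⁻¹ := by
        group
    _ = x * (g₁ * g₂ * g₁⁻¹ * g₂⁻¹) := by rw [← hconj]; group

end Commutator

section Centralizer

variable {G : Type*} [Group G]

lemma inv_mul_conj_mem_of_mk_mem_centralizer {N : Subgroup G} [N.Normal] {a g x : G}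
    (hg : (g : G ⧸ N) ∈ Subgroup.centralizer (conjClass (a : G ⧸ N))) (hx : x ∈ conjClass a) :
    x⁻¹ * (g⁻¹ * x * g) ∈ N := by
  have hxN : (x : G ⧸ N) ∈ conjClass (a : G ⧸ N) :=
    image_conjClass (QuotientGroup.mk'_surjective N) a ▸ ⟨x, hx, rfl⟩
  rw [← QuotientGroup.eq, QuotientGroup.mk_mul, QuotientGroup.mk_mul, QuotientGroup.mk_inv,
    mul_assoc, Subgroup.mem_centralizer_iff.mp hg _ hxN, inv_mul_cancel_left]

lemma le_centralizer_conjClass_of_map_le {N : Subgroup G} [hN : N.Normal] {a : G}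
    (hD : ∀ d ∈ conjClass a * (conjClass a)⁻¹, d ∈ N → d = 1) {K : Subgroup G}
    (hK : K.map (QuotientGroup.mk' N) ≤ Subgroup.centralizer (conjClass (a : G ⧸ N))) :
    K ≤ Subgroup.centralizer (conjClass a) := fun g hg =>
  mem_centralizer_of_conj_mul_inv_eq_one fun _ hx =>
    hD _ (conj_mul_inv_mem_conjClass_mul_inv hx g)
      (hN.mem_comm (inv_mul_conj_mem_of_mk_mem_centralizer (hK ⟨g, hg, rfl⟩) hx))

lemma commutator_le_centralizer_conjClass_of_map_le {T : Subgroup G} [T.Normal]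
    [IsMulCommutative T] {a : G} {K : Subgroup G} (hKT : K ≤ Subgroup.centralizer (T : Set G))
    (hK : K.map (QuotientGroup.mk' T) ≤ Subgroup.centralizer (conjClass (a : G ⧸ T))) :
    ⁅K, K⁆ ≤ Subgroup.centralizer (conjClass a) := fun _ hg =>
  Subgroup.mem_centralizer_iff.mpr fun _ hx =>
    (Subgroup.mem_centralizer_singleton_iff.mp <| commutator_le_centralizer_singleton hKT
      (fun h hh => inv_mul_conj_mem_of_mk_mem_centralizer (hK ⟨h, hh, rfl⟩) hx) hg).symm

end Centralizer

theorem derivedSeries_eta_le_centralizer_conjClass {G : Type*} [Group G] [Finite G]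
    (hG : IsSupersolvable G) (a : G) :
    derivedSeries G (eta (conjClass a * (conjClass a)⁻¹)) ≤
      Subgroup.centralizer (conjClass a) := by
  induction hn : Nat.card G using Nat.strong_induction_on generalizing G with
  | _ n ih =>
  set D := conjClass a * (conjClass a)⁻¹
  by_cases hD : ∀ d ∈ D, d = 1
  · exact centralizer_conjClass_eq_top hD ▸ le_top
  push Not at hD
  obtain ⟨d, -, hd⟩ := hD
  have : Nontrivial G := ⟨d, 1, hd⟩
  obtain ⟨T, hTn, hTc, hTb⟩ := hG.exists_normal_isCyclic_ne_bot
  set π := QuotientGroup.mk' T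
  have hπ : Function.Surjective π := QuotientGroup.mk'_surjective T
  have hcard : Nat.card (G ⧸ T) < n := hn ▸ Subgroup.card_quotient_lt_card hTb
  have hK : (derivedSeries G (eta (π '' D))).map π ≤ Subgroup.centralizer (conjClass (π a)) := by
    have hπD : π '' D = conjClass (π a) * (conjClass (π a))⁻¹ := by
      rw [Set.image_mul, Set.image_inv, image_conjClass hπ]
    rw [hπD]
    exact (map_derivedSeries_le_derivedSeries _ _).trans (ih _ hcard (hG.of_surjective hπ) _ rfl)
  by_cases hDT : ∀ d ∈ D, d ∈ T → d = 1
  · exact (derivedSeries_antitone G (eta_image_le hπ D)).trans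
      (le_centralizer_conjClass_of_map_le hDT hK)
  push Not at hDT
  obtain ⟨d, hdD, hdT, hd1⟩ := hDT
  have hlt : eta (π '' D) < eta D :=
    eta_image_lt hπ (one_mem_conjClass_mul_inv a) hdD hd1 ((QuotientGroup.eq_one_iff d).mpr hdT)
  have hKT : derivedSeries G (eta (π '' D)) ≤ Subgroup.centralizer (T : Set G) :=
    (derivedSeries_antitone G <| one_le_eta (X := π '' D)
      ⟨1, 1, one_mem_conjClass_mul_inv a, map_one π⟩).trans
      (commutator_le_centralizer_of_isCyclic T)
  exact (derivedSeries_antitone G hlt).trans (commutator_le_centralizer_conjClass_of_map_le hKT hK)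

/-- Corollary C: for a finite supersolvable group `G` and conjugacy
classes `A`, `B` with `AB ∩ Z(G) ≠ ∅`, `dl(G/C_G(A)) ≤ 2·η(AB) − 1`; equivalently
the `(2η(AB)−1)`-st derived subgroup of `G` is contained in `C_G(A)`. -/
theorem stmt11 {G : Type*} [Group G] [Fintype G] (hG : IsSupersolvable G) (a b : G)
    (h : (conjClass a * conjClass b ∩ (Subgroup.center G : Set G)).Nonempty) :
    derivedSeries G (2 * eta (conjClass a * conjClass b) - 1) ≤
      Subgroup.centralizer (conjClass a) := by
  obtain ⟨z, ⟨a', ha', b', hb', rfl⟩, hz⟩ := h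
  have hA : conjClass a = conjClass a' := (conjClass_eq_of_mem ha').symm
  have hB : conjClass b = conjClass a'⁻¹ * {a' * b'} := by
    rw [← conjClass_mul_of_mem_center hz, inv_mul_cancel_left, conjClass_eq_of_mem hb']
  have hAB : conjClass a * conjClass b = conjClass a' * (conjClass a')⁻¹ * {a' * b'} := by
    rw [hB, hA, conjClass_inv, mul_assoc]
  rw [hAB, eta_mul_singleton_of_mem_center hz, hA]
  refine (derivedSeries_antitone G ?_).trans (derivedSeries_eta_le_centralizer_conjClass hG a')
  have := one_le_eta ⟨1, one_mem_conjClass_mul_inv a'⟩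
  omega
end
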